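/- In the ReMDM reverse process with masking schedule α and remasking schedule σ, the probability p_m(i) that a fixed location holds the mask token at time t_i = (N-i)/N satisfies p_m(i) = 1 - α_{t_i} for all i = 0,1,...,N, given the recursion p_m(k+1) = p_m(k)·(1 - α_{t_{k+1}} - σ_{t_k}·α_{t_k})/(1 - α_{t_k}) + (1 - p_m(k))·σ_{t_k} and initial condition p_m(0) = 1 - α_{t_0} = 1 (since α_1 = 0). -/
import Mathlib


/-- In the ReMDM reverse process, the mask probability `p_m(i)` at time
`t_i = (N-i)/N` satisfies `p_m(i) = 1 - α(t_i)` for all `i ≤ N`, given the stated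
recursion and the initial condition `p_m(0) = 1` (with `α(t_0) = α(1) = 0`). -/
theorem stmt_15 (N : ℕ) (hN : 0 < N) (α σ : ℝ → ℝ) (pm : ℕ → ℝ)
    (t : ℕ → ℝ) (ht : ∀ i, t i = ((N : ℝ) - i) / N)
    (hα1 : α (t 0) = 0)
    (hαlt : ∀ k, k < N → α (t k) < 1)
    (h0 : pm 0 = 1)
    (hrec : ∀ k, k < N →
      pm (k + 1) = pm k * (1 - α (t (k + 1)) - σ (t k) * α (t k)) / (1 - α (t k))
        + (1 - pm k) * σ (t k)) :
    ∀ i, i ≤ N → pm i = 1 - α (t i) := by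
  intro i hi
  induction i with
  | zero => rw [h0, hα1]; ring
  | succ k ih =>
    have hk : k < N := Nat.lt_of_succ_le hi
    have ihk := ih (Nat.le_of_lt hk)
    have hne : (1 : ℝ) - α (t k) ≠ 0 := by
      have := hαlt k hk; linarith
    rw [hrec k hk, ihk]
    field_simp
    ring
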